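/- If (μ*, t*, u*, v*, η*) is feasible for the system: Σ_{j∈J} μ_j x_j = x^P, Σ_{j∈J} μ_j y_j = y^P, u·y^P - v·x^P = 0, u·y_j - v·x_j + t_j = 0 for all j ∈ J, v ≥ 1, u ≥ 1, μ_j + t_j ≥ η for all j, μ, t ≥ 0, with η* > 0, then for any other nonnegative weights λ with Σ_j λ_j x_j = x^P and Σ_j λ_j y_j = y^P, every j with λ_j > 0 satisfies t*_j = 0 and hence μ*_j ≥ η* > 0. -/
import Mathlib


/-- Theorem 1: if `(μ*, t*, u*, v*, η*)` is feasible for model (4) with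
`η* > 0`, then any other nonnegative representation `λ` of the projection
point uses only indices `j` with `t*_j = 0`, hence `μ*_j ≥ η* > 0`. -/
theorem stmt6 {n m s : ℕ} (x : Fin n → Fin m → ℝ) (y : Fin n → Fin s → ℝ)
    (xP : Fin m → ℝ) (yP : Fin s → ℝ)
    (μ t : Fin n → ℝ) (u : Fin s → ℝ) (v : Fin m → ℝ) (η : ℝ)
    (hμx : ∀ i, ∑ j, μ j * x j i = xP i)
    (hμy : ∀ r, ∑ j, μ j * y j r = yP r)
    (hP : (∑ r, u r * yP r) - (∑ i, v i * xP i) = 0)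
    (hhyp : ∀ j, (∑ r, u r * y j r) - (∑ i, v i * x j i) + t j = 0)
    (hv : ∀ i, 1 ≤ v i) (hu : ∀ r, 1 ≤ u r)
    (hμt : ∀ j, η ≤ μ j + t j)
    (hμnn : ∀ j, 0 ≤ μ j) (htnn : ∀ j, 0 ≤ t j)
    (hη : 0 < η)
    (lam : Fin n → ℝ) (hlam : ∀ j, 0 ≤ lam j)
    (hlx : ∀ i, ∑ j, lam j * x j i = xP i)
    (hly : ∀ r, ∑ j, lam j * y j r = yP r) :
    ∀ j, 0 < lam j → t j = 0 ∧ η ≤ μ j := by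
  have key : ∑ j, lam j * t j = 0 := by
    have h1 : ∑ j, lam j * t j
        = (∑ i, v i * ∑ j, lam j * x j i) - (∑ r, u r * ∑ j, lam j * y j r) := by
      simp_rw [Finset.mul_sum]
      rw [Finset.sum_comm, Finset.sum_comm (f := fun r j => u r * (lam j * y j r)),
        ← Finset.sum_sub_distrib]
      apply Finset.sum_congr rfl
      intro j _
      have h2 : t j = (∑ i, v i * x j i) - (∑ r, u r * y j r) := by
        have := hhyp j; linarith
      rw [h2]
      simp_rw [mul_sub, Finset.mul_sum]
      congr 1 <;> exact Finset.sum_congr rfl fun k _ => by ring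
    rw [h1]
    simp_rw [hlx, hly]
    linarith
  intro j hj
  have hzero : ∀ j ∈ Finset.univ, lam j * t j = 0 := by
    intro k _
    have := (Finset.sum_eq_zero_iff_of_nonneg (fun k _ => mul_nonneg (hlam k) (htnn k))).mp key
    exact this k (Finset.mem_univ k)
  have ht : t j = 0 := by
    have := hzero j (Finset.mem_univ j)
    rcases mul_eq_zero.mp this with h | h
    · exact absurd h (ne_of_gt hj)
    · exact h
  refine ⟨ht, ?_⟩
  have := hμt j
  linarith
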